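/- Assume n ≥ 3. Then (∇_xω)(y,z) = −(1/(2(n−1)))·U(x,y,z) for all x, y, z ∈ g (the structure belongs to the Gray-Hervella class W₄) if and only if v₀ = 0, w₀ = 0, D_s = (Tr D/(2(n−1)))·Id_a and D_a∘J' = J'∘D_a (equivalently, D − (Tr D/(2(n−1)))·Id_a ∈ u(n−1)). -/

import Mathlib

open scoped BigOperators
open Matrix

noncomputable section

/-- The underlying `2n`-dimensional real vector space `ℝ^{2n}`, whose standard basis
plays the role of the orthonormal basis `e₀, e₁, …, e_{2n-1}`. -/
abbrev G (n : ℕ) := Fin (2*n) → ℝ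

/-- The inner product `⟨·,·⟩` making the standard basis orthonormal. -/
def inn {n : ℕ} (x y : G n) : ℝ := ∑ i, x i * y i

/-- The standard basis vector `e k` (indexed by a natural number `k`). -/
def E (n : ℕ) (k : ℕ) : G n := fun i => if (i : ℕ) = k then 1 else 0

/-- Membership in `a = span{e₂, …, e_{2n-1}}`. -/
def inA {n : ℕ} (x : G n) : Prop := ∀ i : Fin (2*n), (i : ℕ) < 2 → x i = 0

/-- The orthogonal almost complex structure `J e_{2i} = e_{2i+1}`, `J e_{2i+1} = -e_{2i}`. -/
def Jm (n : ℕ) : Matrix (Fin (2*n)) (Fin (2*n)) ℝ :=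
  Matrix.of fun k l =>
    if (k : ℕ) = (l : ℕ) + 1 ∧ Even (l : ℕ) then (1 : ℝ)
    else if (l : ℕ) = (k : ℕ) + 1 ∧ Even (k : ℕ) then -1 else 0

/-- `D` is (the extension by zero of) an endomorphism of `a`: it vanishes on
`span{e₀, e₁}` and takes values orthogonal to `span{e₀, e₁}`. -/
def DinA {n : ℕ} (D : Matrix (Fin (2*n)) (Fin (2*n)) ℝ) : Prop :=
  ∀ k l : Fin (2*n), ((k : ℕ) < 2 ∨ (l : ℕ) < 2) → D k l = 0

/-- The matrix of `L` determined by the data `μ, v₀, w₀, D`, i.e.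
`L e₀ = 0`, `L e₁ = μ e₁ + v₀` and `L x = ⟨w₀, x⟩ e₁ + D x` for `x ∈ a`
(for `v₀, w₀ ∈ a` and `D` an endomorphism of `a`). -/
def Lm {n : ℕ} (μ : ℝ) (v₀ w₀ : G n) (D : Matrix (Fin (2*n)) (Fin (2*n)) ℝ) :
    Matrix (Fin (2*n)) (Fin (2*n)) ℝ :=
  Matrix.of fun k l =>
    (if (k : ℕ) = 1 ∧ (l : ℕ) = 1 then μ else 0)
      + (if (l : ℕ) = 1 then v₀ k else 0)
      + (if (k : ℕ) = 1 then w₀ l else 0)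
      + D k l

/-- The Lie bracket of the almost abelian Lie algebra `g = ℝ e₀ ⋉_L u`:
`[e₀, u] = L u` for `u ∈ u = span{e₁, …, e_{2n-1}}` and `[u, v] = 0` for `u, v ∈ u`. -/
def br {n : ℕ} (L : Matrix (Fin (2*n)) (Fin (2*n)) ℝ) (x y : G n) : G n :=
  inn x (E n 0) • L.mulVec y - inn y (E n 0) • L.mulVec x

/-- `nabla` is the Levi-Civita connection of `⟨·,·⟩`, i.e. it satisfies the Koszul
formula `2⟨∇_x y, z⟩ = ⟨[x,y],z⟩ − ⟨[y,z],x⟩ + ⟨[z,x],y⟩`. -/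
def Koszul {n : ℕ} (L : Matrix (Fin (2*n)) (Fin (2*n)) ℝ) (nabla : G n → G n → G n) : Prop :=
  ∀ x y z : G n, 2 * inn (nabla x y) z
    = inn (br L x y) z - inn (br L y z) x + inn (br L z x) y

/-- `(∇_y J)(x) = ∇_y (Jx) − J ∇_y x`. -/
def covJ {n : ℕ} (nabla : G n → G n → G n) (y x : G n) : G n :=
  nabla y ((Jm n).mulVec x) - (Jm n).mulVec (nabla y x)

/-- The rough Laplacian
`(∇*∇J)(x) = Σ_i ((∇_{e_i}(∇_{e_i}J))(x) − (∇_{∇_{e_i}e_i} J)(x))`. -/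
def roughLap {n : ℕ} (nabla : G n → G n → G n) (x : G n) : G n :=
  ∑ i : Fin (2*n),
    (nabla (E n i.val) (covJ nabla (E n i.val) x)
      - covJ nabla (E n i.val) (nabla (E n i.val) x)
      - covJ nabla (nabla (E n i.val) (E n i.val)) x)

/-- `J` is harmonic: `J ∘ (∇*∇J) = (∇*∇J) ∘ J`. -/
def Harmonic {n : ℕ} (nabla : G n → G n → G n) : Prop :=
  ∀ x : G n, (Jm n).mulVec (roughLap nabla x) = roughLap nabla ((Jm n).mulVec x)

/-- Symmetric part of a matrix. -/
def symPart {n : ℕ} (M : Matrix (Fin (2*n)) (Fin (2*n)) ℝ) :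
    Matrix (Fin (2*n)) (Fin (2*n)) ℝ := (1/2 : ℝ) • (M + Mᵀ)

/-- Skew-symmetric part of a matrix. -/
def skewPart {n : ℕ} (M : Matrix (Fin (2*n)) (Fin (2*n)) ℝ) :
    Matrix (Fin (2*n)) (Fin (2*n)) ℝ := (1/2 : ℝ) • (M - Mᵀ)

/-- `γ = (v₀ + w₀)/2`. -/
def gam {n : ℕ} (v₀ w₀ : G n) : G n := (1/2 : ℝ) • (v₀ + w₀)

/-- `ρ = (v₀ − w₀)/2`. -/
def rho {n : ℕ} (v₀ w₀ : G n) : G n := (1/2 : ℝ) • (v₀ - w₀)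

/-- The fundamental 2-form `ω(x,y) = ⟨Jx, y⟩`. -/
def om {n : ℕ} (x y : G n) : ℝ := inn ((Jm n).mulVec x) y

/-- `(∇_x ω)(y,z) = −ω(∇_x y, z) − ω(y, ∇_x z)`. -/
def nablaOm {n : ℕ} (nabla : G n → G n → G n) (x y z : G n) : ℝ :=
  - om (nabla x y) z - om y (nabla x z)

/-- `dω(x,y,z) = −ω([x,y],z) − ω([y,z],x) − ω([z,x],y)`. -/
def dOm {n : ℕ} (L : Matrix (Fin (2*n)) (Fin (2*n)) ℝ) (x y z : G n) : ℝ :=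
  - om (br L x y) z - om (br L y z) x - om (br L z x) y

/-- The codifferential `δω(x) = −Σ_i (∇_{e_i}ω)(e_i, x)`. -/
def deltaOm {n : ℕ} (nabla : G n → G n → G n) (x : G n) : ℝ :=
  - ∑ i : Fin (2*n), nablaOm nabla (E n i.val) (E n i.val) x

/-- The Nijenhuis tensor `N(x,y) = [x,y] + J([Jx,y] + [x,Jy]) − [Jx,Jy]`. -/
def Nij {n : ℕ} (L : Matrix (Fin (2*n)) (Fin (2*n)) ℝ) (x y : G n) : G n :=
  br L x y
    + (Jm n).mulVec (br L ((Jm n).mulVec x) y + br L x ((Jm n).mulVec y))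
    - br L ((Jm n).mulVec x) ((Jm n).mulVec y)

/-- `T⁻(x,y,z) = (∇_x ω)(y,z) − (∇_{Jx} ω)(Jy,z)`. -/
def Tminus {n : ℕ} (nabla : G n → G n → G n) (x y z : G n) : ℝ :=
  nablaOm nabla x y z - nablaOm nabla ((Jm n).mulVec x) ((Jm n).mulVec y) z

/-- `T⁺(x,y,z) = (∇_x ω)(y,z) + (∇_{Jx} ω)(Jy,z)`. -/
def Tplus {n : ℕ} (nabla : G n → G n → G n) (x y z : G n) : ℝ :=
  nablaOm nabla x y z + nablaOm nabla ((Jm n).mulVec x) ((Jm n).mulVec y) z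

/-- `U(x,y,z) = ⟨x,y⟩δω(z) − ⟨x,z⟩δω(y) − ⟨x,Jy⟩δω(Jz) + ⟨x,Jz⟩δω(Jy)`. -/
def Uten {n : ℕ} (nabla : G n → G n → G n) (x y z : G n) : ℝ :=
  inn x y * deltaOm nabla z - inn x z * deltaOm nabla y
    - inn x ((Jm n).mulVec y) * deltaOm nabla ((Jm n).mulVec z)
    + inn x ((Jm n).mulVec z) * deltaOm nabla ((Jm n).mulVec y)

/-- The Lee form `θ(x) = −(1/(n−1)) δω(Jx)`. -/
def Lee {n : ℕ} (nabla : G n → G n → G n) (x : G n) : ℝ :=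
  -(1/((n : ℝ) - 1)) * deltaOm nabla ((Jm n).mulVec x)

/-- The identity of `a`, extended by zero to `g`. -/
def Ia (n : ℕ) : Matrix (Fin (2*n)) (Fin (2*n)) ℝ :=
  Matrix.of fun k l => if k = l ∧ 2 ≤ (k : ℕ) then (1 : ℝ) else 0

/-!
Write `x₀ = ⟨x, e₀⟩`, `x₁ = ⟨x, e₁⟩`, and `S`, `A` for the symmetric and skew-symmetric parts
of `L`. Since `[x, y] = x₀ L y - y₀ L x`, the Koszul formula gives
`(∇_x ω)(y, z) = x₀ (⟨A y, Jz⟩ - ⟨A z, Jy⟩) - y₀ ⟨S x, Jz⟩ + y₁ ⟨S x, z⟩`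
`  + z₀ ⟨S x, Jy⟩ - z₁ ⟨S x, y⟩`,
and tracing over the basis gives `δω(z) = Tr D · z₁ - ⟨v₀, z⟩`.

Put `c = 1/(2(n-1))` and `γ, ρ = (v₀ ± w₀)/2`. For `x, y, z ∈ a`, the identity `∇ω = -c U` at
`(e₁, e₁, z)`, `(e₀, e₀, z)`, `(x, e₁, z)` and `(e₀, y, z)` says `⟨γ, z⟩ = ⟨ρ, z⟩ = c ⟨v₀, z⟩`,
`⟨D_s x, z⟩ = c Tr D ⟨x, z⟩` and `⟨D_a y, Jz⟩ = ⟨D_a z, Jy⟩`; as `2c ≠ 1` for `n ≥ 3`, these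
are exactly the stated conditions. Conversely, under those conditions both sides of `∇ω = -c U`
are the same polynomial in the coordinates.
-/

section Coordinates

variable {n : ℕ}

@[simp]
lemma inn_eq_dotProduct (x y : G n) : inn x y = x ⬝ᵥ y := rfl

lemma E_coe_eq_single (i : Fin (2*n)) : E n i = Pi.single i 1 := by
  ext k
  simp [E, Pi.single_apply, Fin.ext_iff]

lemma dotProduct_E (x : G n) (i : Fin (2*n)) : x ⬝ᵥ E n i = x i := by
  rw [E_coe_eq_single, dotProduct_single_one]

lemma mulVec_E (M : Matrix (Fin (2*n)) (Fin (2*n)) ℝ) (i : Fin (2*n)) :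
    M *ᵥ E n i = fun k => M k i := by
  rw [E_coe_eq_single, mulVec_single_one]
  rfl

@[simp]
lemma E_dotProduct_E_of_ne {k l : ℕ} (h : k ≠ l) : E n k ⬝ᵥ E n l = 0 :=
  Finset.sum_eq_zero fun i _ => by simp only [E]; split_ifs <;> simp_all

lemma E_dotProduct_self {k : ℕ} (hk : k < 2*n) : E n k ⬝ᵥ E n k = 1 := by
  simpa [E] using dotProduct_E (E n k) ⟨k, hk⟩

lemma sum_E_dotProduct_mul {k : ℕ} (hk : k < 2*n) (f : Fin (2*n) → ℝ) :
    ∑ i : Fin (2*n), E n i ⬝ᵥ E n k * f i = f ⟨k, hk⟩ := by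
  rw [Finset.sum_eq_single ⟨k, hk⟩]
  · rw [E_dotProduct_self hk, one_mul]
  · intro i _ hi
    rw [E_dotProduct_E_of_ne (fun h => hi (Fin.ext h)), zero_mul]
  · simp

lemma sum_mulVec_E_dotProduct_mulVec_E (A B : Matrix (Fin (2*n)) (Fin (2*n)) ℝ) :
    ∑ i : Fin (2*n), A *ᵥ E n i ⬝ᵥ B *ᵥ E n i = (Bᵀ * A).trace := by
  simp [mulVec_E, Matrix.trace, Matrix.mul_apply, dotProduct, mul_comm]

lemma inA.dotProduct_E {x : G n} (hx : inA x) {k : ℕ} (hk : k < 2) : x ⬝ᵥ E n k = 0 :=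
  Finset.sum_eq_zero fun i _ => by
    simp only [E]
    split_ifs with h
    · rw [hx i (by omega), zero_mul]
    · rw [mul_zero]

lemma inA_iff {x : G n} : inA x ↔ x ⬝ᵥ E n 0 = 0 ∧ x ⬝ᵥ E n 1 = 0 := by
  refine ⟨fun hx => ⟨hx.dotProduct_E (by norm_num), hx.dotProduct_E (by norm_num)⟩,
    fun h i hi => ?_⟩
  rcases (by omega : (i : ℕ) = 0 ∨ (i : ℕ) = 1) with hi | hi
  · simpa [← dotProduct_E, hi] using h.1
  · simpa [← dotProduct_E, hi] using h.2

lemma inA.E_dotProduct {x : G n} (hx : inA x) {k : ℕ} (hk : k < 2) : E n k ⬝ᵥ x = 0 := by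
  rw [dotProduct_comm, hx.dotProduct_E hk]

lemma inA_E {k : ℕ} (hk : 2 ≤ k) : inA (E n k) :=
  fun i hi => if_neg (by omega)

end Coordinates

section ComplexStructure

variable {n : ℕ}

lemma Jm_transpose : (Jm n)ᵀ = -Jm n := by
  ext k l
  simp only [transpose_apply, Matrix.neg_apply, Jm, of_apply]
  split_ifs with h₁ h₂ <;> first | (have := h₁.1; have := h₂.1; omega) | norm_num

lemma Jm_mulVec_dotProduct (x y : G n) : Jm n *ᵥ x ⬝ᵥ y = -(x ⬝ᵥ Jm n *ᵥ y) := by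
  rw [dotProduct_mulVec, ← mulVec_transpose, Jm_transpose, neg_mulVec, neg_dotProduct, neg_neg,
    dotProduct_comm]

@[simp]
lemma Jm_mulVec_E_zero : Jm n *ᵥ E n 0 = E n 1 := by
  rcases Nat.eq_zero_or_pos n with rfl | hn
  · exact funext fun i => absurd i.2 (by omega)
  · ext k
    rw [show E n 0 = E n (⟨0, by omega⟩ : Fin (2*n)) from rfl, mulVec_E]
    simp only [Jm, of_apply, E]
    split_ifs <;> first | rfl | omega | simp_all

@[simp]
lemma Jm_mulVec_E_one : Jm n *ᵥ E n 1 = -E n 0 := by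
  rcases Nat.eq_zero_or_pos n with rfl | hn
  · exact funext fun i => absurd i.2 (by omega)
  · ext k
    rw [show E n 1 = E n (⟨1, by omega⟩ : Fin (2*n)) from rfl, mulVec_E]
    simp only [Jm, of_apply, E, Pi.neg_apply]
    split_ifs <;> first | rfl | omega | simp_all

lemma Jm_mulVec_dotProduct_E_zero (x : G n) : Jm n *ᵥ x ⬝ᵥ E n 0 = -(x ⬝ᵥ E n 1) := by
  rw [Jm_mulVec_dotProduct, Jm_mulVec_E_zero]

@[simp]
lemma Jm_mulVec_dotProduct_E_one (x : G n) : Jm n *ᵥ x ⬝ᵥ E n 1 = x ⬝ᵥ E n 0 := by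
  rw [Jm_mulVec_dotProduct, Jm_mulVec_E_one, dotProduct_neg, neg_neg]

lemma inA.Jm_mulVec {x : G n} (hx : inA x) : inA (Jm n *ᵥ x) := by
  rw [inA_iff] at hx ⊢
  rw [Jm_mulVec_dotProduct_E_zero, Jm_mulVec_dotProduct_E_one, hx.1, hx.2, neg_zero]
  exact ⟨rfl, rfl⟩

end ComplexStructure

section Endomorphisms

variable {n : ℕ}

lemma mulVec_E_dotProduct_E (M : Matrix (Fin (2*n)) (Fin (2*n)) ℝ) (i j : Fin (2*n)) :
    M *ᵥ E n j ⬝ᵥ E n i = M i j := by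
  rw [dotProduct_E, mulVec_E]

lemma symPart_mulVec_dotProduct (M : Matrix (Fin (2*n)) (Fin (2*n)) ℝ) (u v : G n) :
    symPart M *ᵥ u ⬝ᵥ v = (M *ᵥ u ⬝ᵥ v + M *ᵥ v ⬝ᵥ u) / 2 := by
  rw [symPart, smul_mulVec, add_mulVec, mulVec_transpose, smul_dotProduct, add_dotProduct,
    ← dotProduct_mulVec, dotProduct_comm u, smul_eq_mul]
  ring

lemma skewPart_mulVec_dotProduct (M : Matrix (Fin (2*n)) (Fin (2*n)) ℝ) (u v : G n) :
    skewPart M *ᵥ u ⬝ᵥ v = (M *ᵥ u ⬝ᵥ v - M *ᵥ v ⬝ᵥ u) / 2 := by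
  rw [skewPart, smul_mulVec, sub_mulVec, mulVec_transpose, smul_dotProduct, sub_dotProduct,
    ← dotProduct_mulVec, dotProduct_comm u, smul_eq_mul]
  ring

lemma skewPart_mulVec_dotProduct_swap (M : Matrix (Fin (2*n)) (Fin (2*n)) ℝ) (u v : G n) :
    skewPart M *ᵥ u ⬝ᵥ v = -(skewPart M *ᵥ v ⬝ᵥ u) := by
  rw [skewPart_mulVec_dotProduct, skewPart_mulVec_dotProduct]
  ring

lemma sum_symPart_mulVec_E_dotProduct_E (M : Matrix (Fin (2*n)) (Fin (2*n)) ℝ) :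
    ∑ i : Fin (2*n), symPart M *ᵥ E n i ⬝ᵥ E n i = M.trace := by
  simp only [mulVec_E_dotProduct_E]
  change (symPart M).trace = M.trace
  rw [symPart, trace_smul, trace_add, trace_transpose, smul_eq_mul]
  ring

lemma sum_symPart_mulVec_E_dotProduct_Jm (M : Matrix (Fin (2*n)) (Fin (2*n)) ℝ) :
    ∑ i : Fin (2*n), symPart M *ᵥ E n i ⬝ᵥ Jm n *ᵥ E n i = 0 := by
  have hS : (symPart M)ᵀ = symPart M := by
    rw [symPart, transpose_smul, transpose_add, transpose_transpose, add_comm]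
  have h : (Jm n * symPart M).trace = -(Jm n * symPart M).trace := by
    conv_lhs => rw [← trace_transpose, transpose_mul, hS, Jm_transpose, Matrix.mul_neg,
      trace_neg, trace_mul_comm]
  rw [sum_mulVec_E_dotProduct_mulVec_E, Jm_transpose, Matrix.neg_mul, trace_neg]
  linarith

variable {D : Matrix (Fin (2*n)) (Fin (2*n)) ℝ}

lemma DinA.mulVec_E (hD : DinA D) {k : ℕ} (hk : k < 2) : D *ᵥ E n k = 0 := by
  funext i
  simp only [mulVec, dotProduct, Pi.zero_apply]
  refine Finset.sum_eq_zero fun l _ => ?_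
  simp only [E]
  split_ifs with h
  · rw [hD i l (Or.inr (by omega)), zero_mul]
  · rw [mul_zero]

lemma DinA.inA_mulVec (hD : DinA D) (u : G n) : inA (D *ᵥ u) :=
  fun k hk => by
    simp only [mulVec, dotProduct, hD k _ (Or.inl hk), zero_mul, Finset.sum_const_zero]

lemma DinA.mulVec_dotProduct_E (hD : DinA D) {k : ℕ} (hk : k < 2) (u : G n) :
    D *ᵥ u ⬝ᵥ E n k = 0 :=
  (hD.inA_mulVec u).dotProduct_E hk

lemma DinA.symPart (hD : DinA D) : DinA (symPart D) := by
  intro k l hkl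
  simp [_root_.symPart, hD k l hkl, hD l k hkl.symm]

lemma DinA.skewPart (hD : DinA D) : DinA (skewPart D) := by
  intro k l hkl
  simp [_root_.skewPart, hD k l hkl, hD l k hkl.symm]

lemma DinA.smul (hD : DinA D) (c : ℝ) : DinA (c • D) := by
  intro k l hkl
  simp [hD k l hkl]

lemma DinA_Ia : DinA (Ia n) := by
  intro k l hkl
  simp only [Ia, of_apply]
  split_ifs with h
  · omega
  · rfl

lemma DinA.ext {M N : Matrix (Fin (2*n)) (Fin (2*n)) ℝ} (hM : DinA M) (hN : DinA N)
    (h : ∀ x z : G n, inA x → inA z → M *ᵥ x ⬝ᵥ z = N *ᵥ x ⬝ᵥ z) : M = N := by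
  ext k l
  by_cases hkl : (k : ℕ) < 2 ∨ (l : ℕ) < 2
  · rw [hM k l hkl, hN k l hkl]
  · rw [← mulVec_E_dotProduct_E M k l, ← mulVec_E_dotProduct_E N k l]
    exact h _ _ (inA_E (by omega)) (inA_E (by omega))

lemma Ia_mulVec (u : G n) :
    Ia n *ᵥ u = u - (u ⬝ᵥ E n 0) • E n 0 - (u ⬝ᵥ E n 1) • E n 1 := by
  funext k
  have hIa : (Ia n *ᵥ u) k = if 2 ≤ (k : ℕ) then u k else 0 := by
    simp [Ia, mulVec, dotProduct, ite_and]
  have hk := dotProduct_E u k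
  rw [hIa, Pi.sub_apply, Pi.sub_apply, Pi.smul_apply, Pi.smul_apply, smul_eq_mul, smul_eq_mul]
  simp only [E]
  rcases (by omega : (k : ℕ) = 0 ∨ (k : ℕ) = 1 ∨ 2 ≤ (k : ℕ)) with h | h | h
  · rw [h] at hk
    rw [if_neg (by omega), if_pos h, if_neg (by omega), hk]
    ring
  · rw [h] at hk
    rw [if_neg (by omega), if_neg (by omega), if_pos h, hk]
    ring
  · rw [if_pos h, if_neg (by omega), if_neg (by omega)]
    ring

lemma Ia_mulVec_of_inA {u : G n} (hu : inA u) : Ia n *ᵥ u = u := by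
  rw [Ia_mulVec, (inA_iff.1 hu).1, (inA_iff.1 hu).2, zero_smul, zero_smul, sub_zero, sub_zero]

lemma Ia_mulVec_dotProduct (u v : G n) :
    Ia n *ᵥ u ⬝ᵥ v = u ⬝ᵥ v - (u ⬝ᵥ E n 0) * (v ⬝ᵥ E n 0) - (u ⬝ᵥ E n 1) * (v ⬝ᵥ E n 1) := by
  rw [Ia_mulVec, sub_dotProduct, sub_dotProduct, smul_dotProduct, smul_dotProduct, smul_eq_mul,
    smul_eq_mul, dotProduct_comm (E n 0), dotProduct_comm (E n 1)]

lemma DinA.mulVec_Jm_of_inA {K : Matrix (Fin (2*n)) (Fin (2*n)) ℝ} (hK : DinA K)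
    (h : ∀ x, inA x → K *ᵥ (Jm n *ᵥ x) = Jm n *ᵥ (K *ᵥ x)) (x : G n) :
    K *ᵥ (Jm n *ᵥ x) = Jm n *ᵥ (K *ᵥ x) := by
  have hx : Ia n *ᵥ x + (x ⬝ᵥ E n 0) • E n 0 + (x ⬝ᵥ E n 1) • E n 1 = x := by
    rw [Ia_mulVec]
    abel
  have hIa := h _ (DinA_Ia.inA_mulVec x)
  rw [← hx]
  simp only [mulVec_add, mulVec_smul, Jm_mulVec_E_zero, Jm_mulVec_E_one, mulVec_neg,
    hK.mulVec_E (by norm_num : 0 < 2), hK.mulVec_E (by norm_num : 1 < 2), smul_zero, add_zero,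
    neg_zero, hIa]

end Endomorphisms

section LeviCivita

variable {n : ℕ} {L : Matrix (Fin (2*n)) (Fin (2*n)) ℝ} {nabla : G n → G n → G n}

lemma br_dotProduct (L : Matrix (Fin (2*n)) (Fin (2*n)) ℝ) (x y z : G n) :
    br L x y ⬝ᵥ z = (x ⬝ᵥ E n 0) * (L *ᵥ y ⬝ᵥ z) - (y ⬝ᵥ E n 0) * (L *ᵥ x ⬝ᵥ z) := by
  rw [br, inn_eq_dotProduct, inn_eq_dotProduct, sub_dotProduct, smul_dotProduct, smul_dotProduct,
    smul_eq_mul, smul_eq_mul]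

theorem Koszul.nabla_dotProduct (hK : Koszul L nabla) (x y z : G n) :
    nabla x y ⬝ᵥ z = (x ⬝ᵥ E n 0) * (skewPart L *ᵥ y ⬝ᵥ z)
      - (y ⬝ᵥ E n 0) * (symPart L *ᵥ x ⬝ᵥ z) + (z ⬝ᵥ E n 0) * (symPart L *ᵥ x ⬝ᵥ y) := by
  have h := hK x y z
  simp only [inn_eq_dotProduct, br_dotProduct] at h
  rw [skewPart_mulVec_dotProduct, symPart_mulVec_dotProduct, symPart_mulVec_dotProduct]
  linear_combination h / 2

theorem Koszul.nablaOm_eq (hK : Koszul L nabla) (x y z : G n) :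
    nablaOm nabla x y z =
      (x ⬝ᵥ E n 0) * (skewPart L *ᵥ y ⬝ᵥ Jm n *ᵥ z - skewPart L *ᵥ z ⬝ᵥ Jm n *ᵥ y)
        - (y ⬝ᵥ E n 0) * (symPart L *ᵥ x ⬝ᵥ Jm n *ᵥ z) + (y ⬝ᵥ E n 1) * (symPart L *ᵥ x ⬝ᵥ z)
        + (z ⬝ᵥ E n 0) * (symPart L *ᵥ x ⬝ᵥ Jm n *ᵥ y)
        - (z ⬝ᵥ E n 1) * (symPart L *ᵥ x ⬝ᵥ y) := by
  have hy := hK.nabla_dotProduct x y (Jm n *ᵥ z)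
  have hz := hK.nabla_dotProduct x z (Jm n *ᵥ y)
  rw [Jm_mulVec_dotProduct_E_zero] at hy hz
  rw [nablaOm, om, om, inn_eq_dotProduct, inn_eq_dotProduct, Jm_mulVec_dotProduct (nabla x y),
    dotProduct_comm (Jm n *ᵥ y)]
  linear_combination hy - hz

theorem Koszul.deltaOm_eq (hK : Koszul L nabla) (hn : 0 < n) (z : G n) :
    deltaOm nabla z
      = (z ⬝ᵥ E n 1) * L.trace + L *ᵥ (Jm n *ᵥ z) ⬝ᵥ E n 0 - L *ᵥ E n 1 ⬝ᵥ z := by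
  simp only [deltaOm, hK.nablaOm_eq, Finset.sum_add_distrib, Finset.sum_sub_distrib,
    ← Finset.mul_sum, sum_E_dotProduct_mul (show 0 < 2*n by omega),
    sum_E_dotProduct_mul (show 1 < 2*n by omega), sum_symPart_mulVec_E_dotProduct_Jm,
    sum_symPart_mulVec_E_dotProduct_E, Jm_mulVec_E_zero]
  simp only [skewPart_mulVec_dotProduct, symPart_mulVec_dotProduct]
  ring

end LeviCivita

section AlmostAbelian

variable {n : ℕ} {μ : ℝ} {v₀ w₀ : G n} {D : Matrix (Fin (2*n)) (Fin (2*n)) ℝ}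

lemma Lm_eq (μ : ℝ) (v₀ w₀ : G n) (D : Matrix (Fin (2*n)) (Fin (2*n)) ℝ) :
    Lm μ v₀ w₀ D = μ • vecMulVec (E n 1) (E n 1) + vecMulVec v₀ (E n 1)
      + vecMulVec (E n 1) w₀ + D := by
  ext k l
  simp only [Lm, of_apply, Matrix.add_apply, Matrix.smul_apply, vecMulVec_apply, smul_eq_mul, E]
  split_ifs <;> simp_all

lemma Lm_mulVec_dotProduct (u v : G n) :
    Lm μ v₀ w₀ D *ᵥ u ⬝ᵥ v = μ * (u ⬝ᵥ E n 1) * (v ⬝ᵥ E n 1) + (u ⬝ᵥ E n 1) * (v₀ ⬝ᵥ v)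
      + (w₀ ⬝ᵥ u) * (v ⬝ᵥ E n 1) + D *ᵥ u ⬝ᵥ v := by
  simp only [Lm_eq, add_mulVec, smul_mulVec, vecMulVec_mulVec, op_smul_eq_smul, add_dotProduct,
    smul_dotProduct, smul_eq_mul, dotProduct_comm (E n 1)]
  ring

@[simp]
lemma symPart_Lm_mulVec_dotProduct (u v : G n) :
    symPart (Lm μ v₀ w₀ D) *ᵥ u ⬝ᵥ v = μ * (u ⬝ᵥ E n 1) * (v ⬝ᵥ E n 1)
      + (u ⬝ᵥ E n 1) * (gam v₀ w₀ ⬝ᵥ v) + (v ⬝ᵥ E n 1) * (gam v₀ w₀ ⬝ᵥ u)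
      + symPart D *ᵥ u ⬝ᵥ v := by
  simp only [symPart_mulVec_dotProduct, Lm_mulVec_dotProduct, gam, smul_dotProduct,
    add_dotProduct, smul_eq_mul]
  ring

@[simp]
lemma skewPart_Lm_mulVec_dotProduct (u v : G n) :
    skewPart (Lm μ v₀ w₀ D) *ᵥ u ⬝ᵥ v = (u ⬝ᵥ E n 1) * (rho v₀ w₀ ⬝ᵥ v)
      - (v ⬝ᵥ E n 1) * (rho v₀ w₀ ⬝ᵥ u) + skewPart D *ᵥ u ⬝ᵥ v := by
  simp only [skewPart_mulVec_dotProduct, Lm_mulVec_dotProduct, rho, smul_dotProduct,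
    sub_dotProduct, smul_eq_mul]
  ring

lemma trace_Lm (hn : 0 < n) (hv : inA v₀) (hw : inA w₀) :
    (Lm μ v₀ w₀ D).trace = μ + D.trace := by
  rw [Lm_eq, trace_add, trace_add, trace_add, trace_smul, trace_vecMulVec, trace_vecMulVec,
    trace_vecMulVec, E_dotProduct_self (by omega), (inA_iff.1 hv).2, dotProduct_comm,
    (inA_iff.1 hw).2, smul_eq_mul]
  ring

theorem Koszul.deltaOm_Lm {nabla : G n → G n → G n} (hK : Koszul (Lm μ v₀ w₀ D) nabla)
    (hn : 0 < n) (hv : inA v₀) (hw : inA w₀) (hD : DinA D) (z : G n) :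
    deltaOm nabla z = D.trace * (z ⬝ᵥ E n 1) - v₀ ⬝ᵥ z := by
  rw [hK.deltaOm_eq hn, trace_Lm hn hv hw, Lm_mulVec_dotProduct, Lm_mulVec_dotProduct,
    E_dotProduct_E_of_ne zero_ne_one, (inA_iff.1 hv).1, hD.mulVec_dotProduct_E (by norm_num),
    E_dotProduct_self (by omega), (inA_iff.1 hw).2, hD.mulVec_E (by norm_num), zero_dotProduct]
  ring

lemma gam_add_rho (v₀ w₀ : G n) : gam v₀ w₀ + rho v₀ w₀ = v₀ := by
  simp only [gam, rho]
  module

lemma gam_sub_rho (v₀ w₀ : G n) : gam v₀ w₀ - rho v₀ w₀ = w₀ := by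
  simp only [gam, rho]
  module

end AlmostAbelian

section ClassW4

variable {n : ℕ} {μ : ℝ} {v₀ w₀ : G n} {D : Matrix (Fin (2*n)) (Fin (2*n)) ℝ}
  {nabla : G n → G n → G n} {c : ℝ}

def ProportionalToU (c : ℝ) (nabla : G n → G n → G n) : Prop :=
  ∀ x y z : G n, nablaOm nabla x y z = -c * Uten nabla x y z

theorem ProportionalToU.gam_dotProduct (hW : ProportionalToU c nabla)
    (hK : Koszul (Lm μ v₀ w₀ D) nabla) (hn : 0 < n) (hv : inA v₀) (hw : inA w₀) (hD : DinA D)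
    {z : G n} (hz : inA z) : gam v₀ w₀ ⬝ᵥ z = c * (v₀ ⬝ᵥ z) := by
  simpa [hK.nablaOm_eq, Uten, hK.deltaOm_Lm hn hv hw hD, E_dotProduct_self (by omega : 1 < 2*n),
    hz.dotProduct_E, hz.E_dotProduct, hz.Jm_mulVec.E_dotProduct, hD.symPart.mulVec_E,
    hD.skewPart.mulVec_E, hD.symPart.mulVec_dotProduct_E, hD.skewPart.mulVec_dotProduct_E]
    using hW (E n 1) (E n 1) z

theorem ProportionalToU.rho_dotProduct (hW : ProportionalToU c nabla)
    (hK : Koszul (Lm μ v₀ w₀ D) nabla) (hn : 0 < n) (hv : inA v₀) (hw : inA w₀) (hD : DinA D)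
    {z : G n} (hz : inA z) : rho v₀ w₀ ⬝ᵥ z = c * (v₀ ⬝ᵥ z) := by
  simpa [hK.nablaOm_eq, Uten, hK.deltaOm_Lm hn hv hw hD, E_dotProduct_self (by omega : 0 < 2*n),
    E_dotProduct_self (by omega : 1 < 2*n), hz.dotProduct_E, hz.E_dotProduct,
    hz.Jm_mulVec.E_dotProduct, hv.dotProduct_E, hw.dotProduct_E, hD.symPart.mulVec_E,
    hD.skewPart.mulVec_E, hD.symPart.mulVec_dotProduct_E, hD.skewPart.mulVec_dotProduct_E]
    using hW (E n 0) (E n 0) z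

theorem ProportionalToU.symPart_mulVec_dotProduct (hW : ProportionalToU c nabla)
    (hK : Koszul (Lm μ v₀ w₀ D) nabla) (hn : 0 < n) (hv : inA v₀) (hw : inA w₀) (hD : DinA D)
    {x z : G n} (hx : inA x) (hz : inA z) :
    symPart D *ᵥ x ⬝ᵥ z = c * D.trace * (x ⬝ᵥ z) := by
  simpa [hK.nablaOm_eq, Uten, hK.deltaOm_Lm hn hv hw hD, E_dotProduct_self (by omega : 1 < 2*n),
    hx.dotProduct_E, hx.E_dotProduct, hz.dotProduct_E, hz.E_dotProduct,
    hz.Jm_mulVec.E_dotProduct, hv.dotProduct_E, hw.dotProduct_E, hD.symPart.mulVec_E,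
    hD.skewPart.mulVec_E, hD.symPart.mulVec_dotProduct_E, hD.skewPart.mulVec_dotProduct_E,
    mul_comm (x ⬝ᵥ z), mul_assoc]
    using hW x (E n 1) z

theorem ProportionalToU.skewPart_mulVec_dotProduct_Jm (hW : ProportionalToU c nabla)
    (hK : Koszul (Lm μ v₀ w₀ D) nabla) (hn : 0 < n) (hv : inA v₀) (hw : inA w₀) (hD : DinA D)
    {y z : G n} (hy : inA y) (hz : inA z) :
    skewPart D *ᵥ y ⬝ᵥ Jm n *ᵥ z = skewPart D *ᵥ z ⬝ᵥ Jm n *ᵥ y := by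
  simpa [hK.nablaOm_eq, Uten, hK.deltaOm_Lm hn hv hw hD, E_dotProduct_self (by omega : 0 < 2*n),
    hy.dotProduct_E, hy.E_dotProduct, hy.Jm_mulVec.E_dotProduct, hz.dotProduct_E,
    hz.E_dotProduct, hz.Jm_mulVec.E_dotProduct, hD.symPart.mulVec_E, hD.skewPart.mulVec_E,
    hD.symPart.mulVec_dotProduct_E, hD.skewPart.mulVec_dotProduct_E, sub_eq_zero]
    using hW (E n 0) y z

theorem ProportionalToU.v₀_eq_zero (hW : ProportionalToU c nabla)
    (hK : Koszul (Lm μ v₀ w₀ D) nabla) (hn : 0 < n) (hv : inA v₀) (hw : inA w₀) (hD : DinA D)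
    (hc : 2 * c ≠ 1) : v₀ = 0 := by
  have hγ := hW.gam_dotProduct hK hn hv hw hD hv
  have hρ := hW.rho_dotProduct hK hn hv hw hD hv
  have hsum : gam v₀ w₀ ⬝ᵥ v₀ + rho v₀ w₀ ⬝ᵥ v₀ = v₀ ⬝ᵥ v₀ := by
    rw [← add_dotProduct, gam_add_rho]
  have h : (1 - 2 * c) * (v₀ ⬝ᵥ v₀) = 0 := by linear_combination hγ + hρ - hsum
  exact dotProduct_self_eq_zero.1 ((mul_eq_zero.1 h).resolve_left (sub_ne_zero.2 hc.symm))

theorem ProportionalToU.w₀_eq_zero (hW : ProportionalToU c nabla)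
    (hK : Koszul (Lm μ v₀ w₀ D) nabla) (hn : 0 < n) (hv : inA v₀) (hw : inA w₀) (hD : DinA D) :
    w₀ = 0 := by
  rw [← dotProduct_self_eq_zero]
  nth_rw 1 [← gam_sub_rho v₀ w₀]
  rw [sub_dotProduct, hW.gam_dotProduct hK hn hv hw hD hw, hW.rho_dotProduct hK hn hv hw hD hw,
    sub_self]

theorem ProportionalToU.symPart_eq (hW : ProportionalToU c nabla)
    (hK : Koszul (Lm μ v₀ w₀ D) nabla) (hn : 0 < n) (hv : inA v₀) (hw : inA w₀) (hD : DinA D) :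
    symPart D = (c * D.trace) • Ia n :=
  hD.symPart.ext (DinA_Ia.smul _) fun x z hx hz => by
    rw [hW.symPart_mulVec_dotProduct hK hn hv hw hD hx hz, smul_mulVec, Ia_mulVec_of_inA hx,
      smul_dotProduct, smul_eq_mul]

theorem ProportionalToU.skewPart_mulVec_Jm (hW : ProportionalToU c nabla)
    (hK : Koszul (Lm μ v₀ w₀ D) nabla) (hn : 0 < n) (hv : inA v₀) (hw : inA w₀) (hD : DinA D)
    {x : G n} (hx : inA x) : skewPart D *ᵥ (Jm n *ᵥ x) = Jm n *ᵥ (skewPart D *ᵥ x) := by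
  set u := skewPart D *ᵥ (Jm n *ᵥ x) - Jm n *ᵥ (skewPart D *ᵥ x)
  have hu : inA u := by
    rw [inA_iff]
    simp only [u, sub_dotProduct, Jm_mulVec_dotProduct_E_zero, Jm_mulVec_dotProduct_E_one,
      hD.skewPart.mulVec_dotProduct_E (by norm_num : 0 < 2),
      hD.skewPart.mulVec_dotProduct_E (by norm_num : 1 < 2), neg_zero, sub_zero, and_self]
  have h : u ⬝ᵥ u = 0 := by
    rw [sub_dotProduct, skewPart_mulVec_dotProduct_swap, Jm_mulVec_dotProduct,
      hW.skewPart_mulVec_dotProduct_Jm hK hn hv hw hD hu hx]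
    ring
  exact sub_eq_zero.1 (dotProduct_self_eq_zero.1 h)

theorem proportionalToU_of_symPart_eq (hK : Koszul (Lm μ 0 0 D) nabla) (hn : 0 < n)
    (hD : DinA D) (hs : symPart D = (c * D.trace) • Ia n)
    (hJ : ∀ x, inA x → skewPart D *ᵥ (Jm n *ᵥ x) = Jm n *ᵥ (skewPart D *ᵥ x)) :
    ProportionalToU c nabla := by
  have h0 : inA (0 : G n) := fun _ _ => rfl
  have hsym : ∀ u v, symPart D *ᵥ u ⬝ᵥ v = c * D.trace
      * (u ⬝ᵥ v - (u ⬝ᵥ E n 0) * (v ⬝ᵥ E n 0) - (u ⬝ᵥ E n 1) * (v ⬝ᵥ E n 1)) := by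
    intro u v
    rw [hs, smul_mulVec, smul_dotProduct, Ia_mulVec_dotProduct, smul_eq_mul]
  have hskew : ∀ y z, skewPart D *ᵥ y ⬝ᵥ Jm n *ᵥ z = skewPart D *ᵥ z ⬝ᵥ Jm n *ᵥ y := by
    intro y z
    have h := Jm_mulVec_dotProduct (skewPart D *ᵥ y) z
    rw [← hD.skewPart.mulVec_Jm_of_inA hJ y, skewPart_mulVec_dotProduct_swap] at h
    linarith
  intro x y z
  rw [hK.nablaOm_eq, Uten]
  simp only [inn_eq_dotProduct, hK.deltaOm_Lm hn h0 h0 hD, symPart_Lm_mulVec_dotProduct,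
    skewPart_Lm_mulVec_dotProduct, gam, rho, add_zero, sub_zero, smul_zero, zero_dotProduct,
    hsym, Jm_mulVec_dotProduct_E_zero, Jm_mulVec_dotProduct_E_one, mul_zero]
  linear_combination (x ⬝ᵥ E n 0) * hskew y z

end ClassW4

theorem statement12 (n : ℕ) (hn : 3 ≤ n) (μ : ℝ) (v₀ w₀ : G n) (hv : inA v₀) (hw : inA w₀)
    (D : Matrix (Fin (2*n)) (Fin (2*n)) ℝ) (hD : DinA D)
    (nabla : G n → G n → G n) (hK : Koszul (Lm μ v₀ w₀ D) nabla) :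
    (∀ x y z : G n,
        nablaOm nabla x y z = -(1/(2*((n : ℝ) - 1))) * Uten nabla x y z)
      ↔ (v₀ = 0 ∧ w₀ = 0
          ∧ symPart D = (Matrix.trace D / (2*((n : ℝ) - 1))) • Ia n
          ∧ (∀ x : G n, inA x → (skewPart D).mulVec ((Jm n).mulVec x) = (Jm n).mulVec ((skewPart D).mulVec x))) := by
  have hn0 : 0 < n := by omega
  have hc : 2 * (1 / (2 * ((n : ℝ) - 1))) ≠ 1 := by
    have : (3 : ℝ) ≤ n := by exact_mod_cast hn
    rw [mul_one_div, ne_eq, div_eq_one_iff_eq (by linarith)]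
    linarith
  have hcD : 1 / (2 * ((n : ℝ) - 1)) * D.trace = D.trace / (2 * ((n : ℝ) - 1)) := by ring
  constructor
  · intro hW
    change ProportionalToU (1 / (2 * ((n : ℝ) - 1))) nabla at hW
    refine ⟨hW.v₀_eq_zero hK hn0 hv hw hD hc, hW.w₀_eq_zero hK hn0 hv hw hD, ?_,
      fun x hx => hW.skewPart_mulVec_Jm hK hn0 hv hw hD hx⟩
    rw [← hcD]
    exact hW.symPart_eq hK hn0 hv hw hD
  · rintro ⟨rfl, rfl, hs, hJ⟩
    rw [← hcD] at hs
    exact proportionalToU_of_symPart_eq hK hn0 hD hs hJ
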